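/- Let L^{γδ}_{αβ} be the q³-boson valued L matrix components (L^{00}_{00}=L^{11}_{11}=1, L^{01}_{01}=K, L^{10}_{10}=-K, L^{10}_{01}=A⁺, L^{01}_{10}=A⁻, others zero). For |q| < 1 and |z| < 1, the n = 1 boundary-vector matrix elements R^{γδ}_{αβ}(z) := ((z;q³)_∞/(-zq³;q³)_∞) ⟨χ| z^h L^{γδ}_{αβ} |χ⟩, with ⟨χ| = ∑ ⟨m|/(q³;q³)_m, |χ⟩ = ∑ |m⟩/(q³;q³)_m and ⟨m|m'⟩ = (q⁶;q⁶)_m δ_{m,m'}, evaluate to: R^{00}_{00} = R^{11}_{11} = 1, R^{01}_{01} = q^{3/2}(1-z)/(1+q³z), R^{10}_{10} = -q^{3/2}(1-z)/(1+q³z), R^{10}_{01} = (1+q³)z/(1+q³z), R^{01}_{10} = (1+q³)/(1+q³z). -/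

import Mathlib

/-!
With `p = q³` one has `(p²; p²)_m = (p; p)_m (-p; p)_m`, so for diagonal operators the bracket
`⟨χ| z^h X |χ⟩` collapses to the `q`-binomial series `G(w) = ∑ (-p; p)_n / (p; p)_n wⁿ`, at
`w = z` for `1` and at `w = p z` for `K`; the shifts `A±` change `n` by one and, through
`(-p; p)_{n+1} = (-p; p)_n (1 + pⁿ⁺¹)`, give combinations of `G(z)` and `G(p z)`.
Everything then follows from the `q`-binomial theorem `G(w) (w; p)_∞ = (-p w; p)_∞`.
For general `a` the series `F(w) = ∑ (a; p)_n / (p; p)_n wⁿ` satisfies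
`(1 - w) F(w) = (1 - a w) F(p w)`; iterating `N` times gives
`F(w) (w; p)_N = (a w; p)_N F(pᴺ w)`, and letting `N → ∞` (`F` is continuous at `0` by dominated
convergence) gives `F(w) (w; p)_∞ = (a w; p)_∞`.
-/

/-- The operator on the Fock space `(ℕ →₀ ℂ)` sending `|m⟩` to `c m • |g m⟩`. -/
noncomputable def fockOp (c : ℕ → ℂ) (g : ℕ → ℕ) : Module.End ℂ (ℕ →₀ ℂ) :=
  Finsupp.lsum ℂ fun m => c m • Finsupp.lsingle (g m)

/-- `(a; p)_n = ∏_{k=1}^n (1 - a p^{k-1})`. -/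
noncomputable def qPoch (a p : ℂ) (n : ℕ) : ℂ := ∏ k ∈ Finset.range n, (1 - a * p ^ k)

/-- `(a; p)_∞ = ∏_{k ≥ 1} (1 - a p^{k-1})`. -/
noncomputable def qPochInf (a p : ℂ) : ℂ := ∏' k : ℕ, (1 - a * p ^ k)

/-- The `q³`-boson valued `L` matrix `L^{γδ}_{αβ}` (see Statement 6). -/
noncomputable def Lmat (q sq : ℂ) (γ δ α β : Fin 2) : Module.End ℂ (ℕ →₀ ℂ) :=
  let AP := fockOp (fun _ => 1) (· + 1)
  let AM := fockOp (fun m => 1 - q ^ (6 * m)) (· - 1)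
  let K := fockOp (fun m => sq ^ 3 * q ^ (3 * m)) id
  if (γ, δ, α, β) = (0, 0, 0, 0) ∨ (γ, δ, α, β) = (1, 1, 1, 1) then 1
  else if (γ, δ, α, β) = (0, 1, 0, 1) then K
  else if (γ, δ, α, β) = (1, 0, 1, 0) then -K
  else if (γ, δ, α, β) = (1, 0, 0, 1) then AP
  else if (γ, δ, α, β) = (0, 1, 1, 0) then AM
  else 0

open Filter Topology

section QBinomial

variable {a p w : ℂ}

lemma qPoch_succ (a p : ℂ) (n : ℕ) : qPoch a p (n + 1) = qPoch a p n * (1 - a * p ^ n) :=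
  Finset.prod_range_succ _ _

lemma norm_mul_pow_lt_one (hp : ‖p‖ ≤ 1) (hw : ‖w‖ < 1) (k : ℕ) :
    ‖w * p ^ k‖ < 1 := by
  rw [norm_mul, norm_pow]
  exact mul_lt_one_of_nonneg_of_lt_one_left (norm_nonneg w) hw (pow_le_one₀ (norm_nonneg p) hp)

lemma one_sub_ne_zero_of_norm_lt_one (hw : ‖w‖ < 1) : 1 - w ≠ 0 := by
  rw [sub_ne_zero]
  rintro rfl
  simp at hw

lemma one_add_ne_zero_of_norm_lt_one (hw : ‖w‖ < 1) : 1 + w ≠ 0 := by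
  simpa using one_sub_ne_zero_of_norm_lt_one (w := -w) (by simpa using hw)

lemma norm_mul_lt_one (hp : ‖p‖ ≤ 1) (hw : ‖w‖ < 1) : ‖p * w‖ < 1 := by
  simpa [mul_comm] using norm_mul_pow_lt_one hp hw 1

lemma qPoch_ne_zero (hp : ‖p‖ ≤ 1) (ha : ‖a‖ < 1) (n : ℕ) : qPoch a p n ≠ 0 :=
  Finset.prod_ne_zero_iff.2 fun k _ =>
    one_sub_ne_zero_of_norm_lt_one (norm_mul_pow_lt_one hp ha k)

noncomputable def qBinomCoeff (a p : ℂ) (n : ℕ) : ℂ := qPoch a p n / qPoch p p n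

lemma qBinomCoeff_zero (a p : ℂ) : qBinomCoeff a p 0 = 1 := by
  simp [qBinomCoeff, qPoch]

lemma qBinomCoeff_succ (a p : ℂ) (n : ℕ) :
    qBinomCoeff a p (n + 1) = qBinomCoeff a p n * ((1 - a * p ^ n) / (1 - p * p ^ n)) := by
  rw [qBinomCoeff, qBinomCoeff, qPoch_succ, qPoch_succ, mul_div_mul_comm]

lemma tendsto_qBinomCoeff_ratio (hp : ‖p‖ < 1) (a : ℂ) :
    Tendsto (fun n : ℕ => (1 - a * p ^ n) / (1 - p * p ^ n)) atTop (𝓝 1) := by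
  have h := tendsto_pow_atTop_nhds_zero_of_norm_lt_one hp
  simpa [div_eq_mul_inv] using (tendsto_const_nhds.sub (h.const_mul a)).mul
    ((tendsto_const_nhds.sub (h.const_mul p)).inv₀ (by simp : (1 : ℂ) - p * 0 ≠ 0))

lemma summable_norm_qBinomCoeff_mul_pow (hp : ‖p‖ < 1) (a : ℂ) {r : ℝ} (hr₀ : 0 ≤ r)
    (hr : r < 1) : Summable fun n => ‖qBinomCoeff a p n‖ * r ^ n := by
  have hratio : ∀ᶠ n in atTop, ‖(1 - a * p ^ n) / (1 - p * p ^ n)‖ * r ≤ (1 + r) / 2 := by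
    refine Tendsto.eventually_le_const (v := r) (by linarith) ?_
    simpa using ((tendsto_qBinomCoeff_ratio hp a).norm).mul_const r
  refine summable_of_ratio_norm_eventually_le (r := (1 + r) / 2) (by linarith) ?_
  filter_upwards [hratio] with n hn
  rw [Real.norm_of_nonneg (by positivity), Real.norm_of_nonneg (by positivity),
    qBinomCoeff_succ, norm_mul, pow_succ]
  calc ‖qBinomCoeff a p n‖ * ‖(1 - a * p ^ n) / (1 - p * p ^ n)‖ * (r ^ n * r)
      = (‖(1 - a * p ^ n) / (1 - p * p ^ n)‖ * r) * (‖qBinomCoeff a p n‖ * r ^ n) := by ring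
    _ ≤ (1 + r) / 2 * (‖qBinomCoeff a p n‖ * r ^ n) := by gcongr

lemma summable_qBinomCoeff_mul_pow (hp : ‖p‖ < 1) (a : ℂ) (hw : ‖w‖ < 1) :
    Summable fun n => qBinomCoeff a p n * w ^ n :=
  .of_norm_bounded (summable_norm_qBinomCoeff_mul_pow hp a (norm_nonneg w) hw)
    fun n => by rw [norm_mul, norm_pow]

noncomputable def qBinomialSeries (a p w : ℂ) : ℂ := ∑' n, qBinomCoeff a p n * w ^ n

lemma one_sub_mul_qBinomialSeries (hp : ‖p‖ < 1) (hw : ‖w‖ < 1) :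
    (1 - w) * qBinomialSeries a p w = (1 - a * w) * qBinomialSeries a p (p * w) := by
  have S₁ := (summable_qBinomCoeff_mul_pow hp a hw).hasSum
  have S₂ := (summable_qBinomCoeff_mul_pow hp a (norm_mul_lt_one hp.le hw)).hasSum
  have hshift := (hasSum_nat_add_iff' 1).2 (S₁.sub S₂)
  have hstep : ∀ n, qBinomCoeff a p (n + 1) * w ^ (n + 1) -
      qBinomCoeff a p (n + 1) * (p * w) ^ (n + 1) =
      w * (qBinomCoeff a p n * w ^ n) - a * w * (qBinomCoeff a p n * (p * w) ^ n) := by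
    intro n
    have hne := one_sub_ne_zero_of_norm_lt_one (norm_mul_pow_lt_one hp.le hp n)
    calc _ = qBinomCoeff a p n * ((1 - a * p ^ n) / (1 - p * p ^ n) * (1 - p * p ^ n))
          * w ^ (n + 1) := by rw [qBinomCoeff_succ]; ring
      _ = _ := by rw [div_mul_cancel₀ _ hne]; ring
  simp only [hstep, Finset.range_one, Finset.sum_singleton, pow_zero, sub_self, sub_zero] at hshift
  have := hshift.unique ((S₁.mul_left w).sub (S₂.mul_left (a * w)))
  rw [qBinomialSeries, qBinomialSeries]
  linear_combination this

lemma qBinomialSeries_mul_qPoch (hp : ‖p‖ < 1) (hw : ‖w‖ < 1) (N : ℕ) :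
    qBinomialSeries a p w * qPoch w p N =
      qPoch (a * w) p N * qBinomialSeries a p (w * p ^ N) := by
  induction N with
  | zero => simp [qPoch]
  | succ N ih =>
    rw [qPoch_succ, qPoch_succ, ← mul_assoc, ih, mul_assoc, mul_comm (qBinomialSeries _ _ _),
      one_sub_mul_qBinomialSeries hp (norm_mul_pow_lt_one hp.le hw N), pow_succ]
    ring_nf

lemma tendsto_qBinomialSeries_nhds_zero (hp : ‖p‖ < 1) (a : ℂ) :
    Tendsto (qBinomialSeries a p) (𝓝 0) (𝓝 1) := by
  have hlim : ∑' n, qBinomCoeff a p n * (0 : ℂ) ^ n = 1 := by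
    rw [tsum_eq_single 0 (fun n hn => by simp [hn]), pow_zero, mul_one, qBinomCoeff_zero]
  rw [← hlim]
  refine tendsto_tsum_of_dominated_convergence
    (summable_norm_qBinomCoeff_mul_pow hp a (by norm_num : (0 : ℝ) ≤ 1 / 2) (by norm_num))
    (fun n => ((continuous_pow n).tendsto 0).const_mul _) ?_
  filter_upwards [Metric.ball_mem_nhds (0 : ℂ) (by norm_num : (0 : ℝ) < 1 / 2)] with w hw n
  rw [mem_ball_zero_iff] at hw
  rw [norm_mul, norm_pow]
  gcongr

lemma multipliable_one_sub_mul_pow (hp : ‖p‖ < 1) (w : ℂ) :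
    Multipliable fun k : ℕ => 1 - w * p ^ k := by
  simp_rw [sub_eq_add_neg]
  refine multipliable_one_add_of_summable ?_
  simpa [norm_mul, norm_pow] using
    (summable_geometric_of_lt_one (norm_nonneg p) hp).mul_left ‖w‖

lemma tendsto_qPoch_qPochInf (hp : ‖p‖ < 1) (w : ℂ) :
    Tendsto (qPoch w p) atTop (𝓝 (qPochInf w p)) :=
  (multipliable_one_sub_mul_pow hp w).tendsto_prod_tprod_nat

lemma qPochInf_ne_zero (hp : ‖p‖ < 1) (hw : ‖w‖ < 1) : qPochInf w p ≠ 0 := by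
  simp_rw [qPochInf, sub_eq_add_neg]
  refine tprod_one_add_ne_zero_of_summable
    (fun k => by simpa [sub_eq_add_neg] using
      one_sub_ne_zero_of_norm_lt_one (norm_mul_pow_lt_one hp.le hw k)) ?_
  simpa [norm_mul, norm_pow] using
    (summable_geometric_of_lt_one (norm_nonneg p) hp).mul_left ‖w‖

lemma qPochInf_eq_one_sub_mul (hp : ‖p‖ < 1) (w : ℂ) :
    qPochInf w p = (1 - w) * qPochInf (w * p) p := by
  rw [qPochInf, tprod_eq_zero_mul', qPochInf]
  · simp [pow_succ, mul_assoc, mul_comm p]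
  · simpa [pow_succ, mul_assoc, mul_comm p] using multipliable_one_sub_mul_pow hp (w * p)

theorem qBinomialSeries_mul_qPochInf (hp : ‖p‖ < 1) (hw : ‖w‖ < 1) :
    qBinomialSeries a p w * qPochInf w p = qPochInf (a * w) p := by
  have hG : Tendsto (fun N => qBinomialSeries a p (w * p ^ N)) atTop (𝓝 1) :=
    (tendsto_qBinomialSeries_nhds_zero hp a).comp
      (by simpa using (tendsto_pow_atTop_nhds_zero_of_norm_lt_one hp).const_mul w)
  refine tendsto_nhds_unique ((tendsto_qPoch_qPochInf hp w).const_mul _) ?_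
  simpa [qBinomialSeries_mul_qPoch hp hw] using (tendsto_qPoch_qPochInf hp (a * w)).mul hG

end QBinomial

section BoundaryVector

variable {p z : ℂ}

lemma qPoch_sq_eq_mul (p : ℂ) (n : ℕ) :
    qPoch (p ^ 2) (p ^ 2) n = qPoch p p n * qPoch (-p) p n := by
  rw [qPoch, qPoch, qPoch, ← Finset.prod_mul_distrib]
  exact Finset.prod_congr rfl fun k _ => by ring

lemma fockOp_single (c : ℕ → ℂ) (g : ℕ → ℕ) (m : ℕ) (v : ℂ) :
    fockOp c g (Finsupp.single m v) = Finsupp.single (g m) (c m * v) := by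
  simp [fockOp, Finsupp.smul_single]

lemma fockOp_one_id : fockOp (fun _ => 1) id = 1 := by
  ext m : 2
  simp [fockOp_single]

lemma neg_fockOp (c : ℕ → ℂ) (g : ℕ → ℕ) : -fockOp c g = fockOp (fun m => -c m) g := by
  ext m : 2
  simp [fockOp_single]

/-- `⟨χ| X |χ⟩` with `p = q³`: `⟨χ| = ∑ ⟨m|/(p; p)_m`, `|χ⟩ = ∑ |m⟩/(p; p)_m` and
`⟨m|m⟩ = (p²; p²)_m`. -/
noncomputable def chiBracket (p : ℂ) (X : Module.End ℂ (ℕ →₀ ℂ)) : ℂ :=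
  ∑' b : ℕ, (qPoch p p b)⁻¹ *
    ((X (Finsupp.single b 1)).sum fun a c => qPoch (p ^ 2) (p ^ 2) a / qPoch p p a * c)

lemma chiBracket_zh_mul_fockOp (p z : ℂ) (c : ℕ → ℂ) (g : ℕ → ℕ) :
    chiBracket p (fockOp (fun m => z ^ m) id * fockOp c g) = ∑' b, (qPoch p p b)⁻¹ *
      (qPoch (p ^ 2) (p ^ 2) (g b) / qPoch p p (g b) * (z ^ g b * c b)) := by
  simp only [chiBracket, Module.End.mul_apply, fockOp_single, id, mul_one]
  exact tsum_congr fun b => by rw [Finsupp.sum_single_index (mul_zero _)]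

lemma chiBracket_zh_mul_diag (hp : ‖p‖ < 1) (s t : ℂ) :
    chiBracket p (fockOp (fun m => z ^ m) id * fockOp (fun m => s * t ^ m) id) =
      s * qBinomialSeries (-p) p (t * z) := by
  rw [chiBracket_zh_mul_fockOp, qBinomialSeries, ← tsum_mul_left]
  refine tsum_congr fun b => ?_
  have := qPoch_ne_zero hp.le hp b
  simp only [id, qPoch_sq_eq_mul, qBinomCoeff]
  field_simp
  ring

lemma chiBracket_zh_mul_one (hp : ‖p‖ < 1) :
    chiBracket p (fockOp (fun m => z ^ m) id * 1) = qBinomialSeries (-p) p z := by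
  simpa [fockOp_one_id] using chiBracket_zh_mul_diag (z := z) hp 1 1

lemma chiBracket_zh_mul_raise (hp : ‖p‖ < 1) (hz : ‖z‖ < 1) :
    chiBracket p (fockOp (fun m => z ^ m) id * fockOp (fun _ => 1) (· + 1)) =
      z * qBinomialSeries (-p) p z + p * z * qBinomialSeries (-p) p (p * z) := by
  have hpz := norm_mul_lt_one hp.le hz
  rw [chiBracket_zh_mul_fockOp, qBinomialSeries, qBinomialSeries, ← tsum_mul_left,
    ← tsum_mul_left, ← Summable.tsum_add ((summable_qBinomCoeff_mul_pow hp _ hz).mul_left _)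
      ((summable_qBinomCoeff_mul_pow hp _ hpz).mul_left _)]
  refine tsum_congr fun b => ?_
  have := qPoch_ne_zero hp.le hp b
  have := one_sub_ne_zero_of_norm_lt_one (norm_mul_pow_lt_one hp.le hp b)
  simp only [qPoch_sq_eq_mul, qBinomCoeff, qPoch_succ]
  field_simp
  ring

lemma chiBracket_zh_mul_lower (hp : ‖p‖ < 1) (hz : ‖z‖ < 1) :
    chiBracket p (fockOp (fun m => z ^ m) id * fockOp (fun m => 1 - (p ^ 2) ^ m) (· - 1)) =
      qBinomialSeries (-p) p z + p * qBinomialSeries (-p) p (p * z) := by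
  have hpz := norm_mul_lt_one hp.le hz
  have hs₁ := summable_qBinomCoeff_mul_pow hp (-p) hz
  have hs₂ := (summable_qBinomCoeff_mul_pow hp (-p) hpz).mul_left p
  have hterm : ∀ b : ℕ, (qPoch p p (b + 1))⁻¹ * (qPoch (p ^ 2) (p ^ 2) (b + 1 - 1) /
      qPoch p p (b + 1 - 1) * (z ^ (b + 1 - 1) * (1 - (p ^ 2) ^ (b + 1)))) =
      qBinomCoeff (-p) p b * z ^ b + p * (qBinomCoeff (-p) p b * (p * z) ^ b) := by
    intro b
    have := qPoch_ne_zero hp.le hp b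
    have := one_sub_ne_zero_of_norm_lt_one (norm_mul_pow_lt_one hp.le hp b)
    simp only [qPoch_sq_eq_mul, qBinomCoeff, qPoch_succ, Nat.add_sub_cancel]
    field_simp
    ring
  rw [chiBracket_zh_mul_fockOp,
    tsum_eq_zero_add' ((hs₁.add hs₂).congr fun b => (hterm b).symm), tsum_congr hterm,
    hs₁.tsum_add hs₂, tsum_mul_left]
  simp [qBinomialSeries]

lemma qPochInf_div_mul_qBinomialSeries (hp : ‖p‖ < 1) (hz : ‖z‖ < 1) :
    qPochInf z p / qPochInf (-(z * p)) p * qBinomialSeries (-p) p z = 1 := by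
  have hzp : ‖-(z * p)‖ < 1 := by simpa using norm_mul_pow_lt_one hp.le hz 1
  rw [div_mul_eq_mul_div, mul_comm, qBinomialSeries_mul_qPochInf hp hz, neg_mul, mul_comm p,
    div_self (qPochInf_ne_zero hp hzp)]

lemma qPochInf_div_mul_qBinomialSeries_mul (hp : ‖p‖ < 1) (hz : ‖z‖ < 1) :
    qPochInf z p / qPochInf (-(z * p)) p * qBinomialSeries (-p) p (p * z) =
      (1 - z) / (1 + p * z) := by
  have hpz := norm_mul_lt_one hp.le hz
  have hne : qPochInf (-(p * z) * p) p ≠ 0 :=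
    qPochInf_ne_zero hp (by simpa using norm_mul_pow_lt_one hp.le hpz 1)
  have h1 := one_add_ne_zero_of_norm_lt_one hpz
  have hbin := qBinomialSeries_mul_qPochInf (a := -p) hp hpz
  rw [show -p * (p * z) = -(p * z) * p by ring] at hbin
  rw [qPochInf_eq_one_sub_mul hp z, qPochInf_eq_one_sub_mul hp (-(z * p)), mul_comm z p,
    div_mul_eq_mul_div, div_eq_div_iff (mul_ne_zero (by simpa using h1) hne) h1]
  linear_combination (1 - z) * (1 + p * z) * hbin

end BoundaryVector

theorem stmt_18_general (q sq z : ℂ) (hq : ‖q‖ < 1) (hz : ‖z‖ < 1) :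
    let zh := fockOp (fun m => z ^ m) id
    let Brk : Module.End ℂ (ℕ →₀ ℂ) → ℂ := fun X =>
      ∑' b : ℕ, (qPoch (q ^ 3) (q ^ 3) b)⁻¹ *
        ((X (Finsupp.single b 1)).sum fun a c =>
          qPoch (q ^ 6) (q ^ 6) a / qPoch (q ^ 3) (q ^ 3) a * c)
    let nrm := qPochInf z (q ^ 3) / qPochInf (-(z * q ^ 3)) (q ^ 3)
    nrm * Brk (zh * Lmat q sq 0 0 0 0) = 1 ∧
    nrm * Brk (zh * Lmat q sq 1 1 1 1) = 1 ∧
    nrm * Brk (zh * Lmat q sq 0 1 0 1) = sq ^ 3 * (1 - z) / (1 + q ^ 3 * z) ∧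
    nrm * Brk (zh * Lmat q sq 1 0 1 0) = -(sq ^ 3 * (1 - z) / (1 + q ^ 3 * z)) ∧
    nrm * Brk (zh * Lmat q sq 1 0 0 1) = (1 + q ^ 3) * z / (1 + q ^ 3 * z) ∧
    nrm * Brk (zh * Lmat q sq 0 1 1 0) = (1 + q ^ 3) / (1 + q ^ 3 * z) := by
  intro zh Brk nrm
  have hp : ‖q ^ 3‖ < 1 := by simpa using pow_lt_one₀ (norm_nonneg q) hq three_ne_zero
  have hq6 : q ^ 6 = (q ^ 3) ^ 2 := by ring
  have hBrk : ∀ X, Brk X = chiBracket (q ^ 3) X := fun X => by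
    simp only [Brk, chiBracket, hq6]
  have hG := qPochInf_div_mul_qBinomialSeries hp hz
  have hne := one_add_ne_zero_of_norm_lt_one (norm_mul_lt_one hp.le hz)
  have hGp := qPochInf_div_mul_qBinomialSeries_mul hp hz
  have hGp_mul := (eq_div_iff hne).1 hGp
  have hK : Lmat q sq 0 1 0 1 = fockOp (fun m => sq ^ 3 * (q ^ 3) ^ m) id := by
    simp [Lmat, pow_mul]
  have hnegK : Lmat q sq 1 0 1 0 = fockOp (fun m => -sq ^ 3 * (q ^ 3) ^ m) id := by
    simp [Lmat, pow_mul, neg_fockOp]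
  have hAp : Lmat q sq 1 0 0 1 = fockOp (fun _ => 1) (· + 1) := by simp [Lmat]
  have hAm : Lmat q sq 0 1 1 0 = fockOp (fun m => 1 - ((q ^ 3) ^ 2) ^ m) (· - 1) := by
    simp [Lmat, ← hq6, pow_mul]
  have hL₁ : Lmat q sq 0 0 0 0 = 1 ∧ Lmat q sq 1 1 1 1 = 1 := by simp [Lmat]
  refine ⟨?_, ?_, ?_, ?_, ?_, ?_⟩
  · rw [hBrk, hL₁.1, chiBracket_zh_mul_one hp, hG]
  · rw [hBrk, hL₁.2, chiBracket_zh_mul_one hp, hG]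
  · rw [hBrk, hK, chiBracket_zh_mul_diag hp, mul_left_comm, hGp, mul_div_assoc]
  · rw [hBrk, hnegK, chiBracket_zh_mul_diag hp, mul_left_comm, hGp]
    ring
  · rw [hBrk, hAp, chiBracket_zh_mul_raise hp hz, eq_div_iff hne]
    linear_combination (1 + q ^ 3 * z) * z * hG + q ^ 3 * z * hGp_mul
  · rw [hBrk, hAm, chiBracket_zh_mul_lower hp hz, eq_div_iff hne]
    linear_combination (1 + q ^ 3 * z) * hG + q ^ 3 * hGp_mul

/-- the `n = 1` boundary-vector matrix elements
`R^{γδ}_{αβ}(z) = ((z;q³)_∞/(-zq³;q³)_∞) ⟨χ| z^h L^{γδ}_{αβ} |χ⟩` (with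
`⟨χ| = ∑ ⟨m|/(q³;q³)_m`, `|χ⟩ = ∑ |m⟩/(q³;q³)_m`, `⟨m|m'⟩ = (q⁶;q⁶)_m δ_{m,m'}`)
evaluate to `R^{00}_{00} = R^{11}_{11} = 1`,
`R^{01}_{01} = q^{3/2}(1-z)/(1+q³z)`, `R^{10}_{10} = -q^{3/2}(1-z)/(1+q³z)`,
`R^{10}_{01} = (1+q³)z/(1+q³z)`, `R^{01}_{10} = (1+q³)/(1+q³z)`. -/
theorem stmt_18 (q sq z : ℂ) (hsq : sq ^ 2 = q) (hq : ‖q‖ < 1) (hz : ‖z‖ < 1) :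
    let zh := fockOp (fun m => z ^ m) id
    let Brk : Module.End ℂ (ℕ →₀ ℂ) → ℂ := fun X =>
      ∑' b : ℕ, (qPoch (q ^ 3) (q ^ 3) b)⁻¹ *
        ((X (Finsupp.single b 1)).sum fun a c =>
          qPoch (q ^ 6) (q ^ 6) a / qPoch (q ^ 3) (q ^ 3) a * c)
    let nrm := qPochInf z (q ^ 3) / qPochInf (-(z * q ^ 3)) (q ^ 3)
    nrm * Brk (zh * Lmat q sq 0 0 0 0) = 1 ∧
    nrm * Brk (zh * Lmat q sq 1 1 1 1) = 1 ∧
    nrm * Brk (zh * Lmat q sq 0 1 0 1) = sq ^ 3 * (1 - z) / (1 + q ^ 3 * z) ∧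
    nrm * Brk (zh * Lmat q sq 1 0 1 0) = -(sq ^ 3 * (1 - z) / (1 + q ^ 3 * z)) ∧
    nrm * Brk (zh * Lmat q sq 1 0 0 1) = (1 + q ^ 3) * z / (1 + q ^ 3 * z) ∧
    nrm * Brk (zh * Lmat q sq 0 1 1 0) = (1 + q ^ 3) / (1 + q ^ 3 * z) :=
  stmt_18_general q sq z hq hz
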